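/- With the choice w(y) = ( N^{-1} Σ_{i=1}^N |φ_i(y)|^2 )^{-1}, the weighted Nikolskii constant satisfies N(P,τ,w) = √N. -/

import Mathlib

open MeasureTheory

theorem L2calc {Ω : Type*} [MeasurableSpace Ω] (τ : Measure Ω)
    (N : ℕ) (φ : Fin N → Ω → ℂ)
    (hint : ∀ i j, Integrable (fun x => φ i x * star (φ j x)) τ)
    (horth : ∀ i j, ∫ x, φ i x * star (φ j x) ∂τ = if i = j then 1 else 0)
    (a : Fin N → ℂ) :
    ∫ x, ‖∑ i, a i * φ i x‖ ^ 2 ∂τ = ∑ i, ‖a i‖ ^ 2 := by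
  have hexp : ∀ x : Ω, (∑ i, a i * φ i x) * star (∑ j, a j * φ j x)
      = ∑ i, ∑ j, (a i * star (a j)) * (φ i x * star (φ j x)) := by
    intro x
    rw [star_sum, Finset.sum_mul_sum]
    exact Finset.sum_congr rfl fun i _ => Finset.sum_congr rfl fun j _ => by
      rw [star_mul']; ring
  have hintF : Integrable (fun x => (∑ i, a i * φ i x) * star (∑ j, a j * φ j x)) τ := by
    simp only [hexp]
    exact integrable_finset_sum _ fun i _ => integrable_finset_sum _
      fun j _ => ((hint i j).const_mul _)
  have hval : ∫ x, (∑ i, a i * φ i x) * star (∑ j, a j * φ j x) ∂τ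
      = ∑ i, (‖a i‖ ^ 2 : ℂ) := by
    simp only [hexp]
    rw [integral_finset_sum _ fun i _ => integrable_finset_sum _
      fun j _ => ((hint i j).const_mul _)]
    refine Finset.sum_congr rfl fun i _ => ?_
    rw [integral_finset_sum _ fun j _ => ((hint i j).const_mul _)]
    simp only [integral_const_mul, horth]
    rw [Finset.sum_eq_single i]
    · rw [if_pos rfl, mul_one, Complex.star_def, Complex.mul_conj,
        Complex.normSq_eq_norm_sq]
      push_cast; ring
    · intro j _ hj; simp [Ne.symm hj]
    · simp
  have hre : ∀ x : Ω, ‖∑ i, a i * φ i x‖ ^ 2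
      = ((∑ i, a i * φ i x) * star (∑ j, a j * φ j x)).re := by
    intro x
    rw [Complex.star_def, Complex.mul_conj, Complex.normSq_eq_norm_sq]
    exact (Complex.ofReal_re _).symm
  calc ∫ x, ‖∑ i, a i * φ i x‖ ^ 2 ∂τ
      = ∫ x, ((∑ i, a i * φ i x) * star (∑ j, a j * φ j x)).re ∂τ := by
        simp_rw [hre]
    _ = ((∫ x, (∑ i, a i * φ i x) * star (∑ j, a j * φ j x) ∂τ) : ℂ).re :=
        integral_re hintF
    _ = ∑ i, ‖a i‖ ^ 2 := by rw [hval]; simp [← Complex.ofReal_pow]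

theorem CSpt {N : ℕ} (a b : Fin N → ℂ) :
    ‖∑ i, a i * b i‖ ≤ Real.sqrt (∑ i, ‖a i‖ ^ 2) * Real.sqrt (∑ i, ‖b i‖ ^ 2) :=
  calc ‖∑ i, a i * b i‖ ≤ ∑ i, ‖a i * b i‖ := norm_sum_le _ _
    _ = ∑ i, ‖a i‖ * ‖b i‖ := by simp [norm_mul]
    _ ≤ _ := Real.sum_mul_le_sqrt_mul_sqrt _ _ _

set_option maxHeartbeats 1000000 in
/-- With the choice `w(y) = (N⁻¹ Σᵢ |φᵢ(y)|²)⁻¹`, the weighted Nikolskii constant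
satisfies `N(P,τ,w) = √N`. -/
theorem stmt8 {Ω : Type*} [MeasurableSpace Ω] [TopologicalSpace Ω]
    (τ : Measure Ω) [IsProbabilityMeasure τ]
    (N : ℕ) (hN : 0 < N) (φ : Fin N → Ω → ℂ)
    (hint : ∀ i j, Integrable (fun x => φ i x * star (φ j x)) τ)
    (horth : ∀ i j, ∫ x, φ i x * star (φ j x) ∂τ = if i = j then 1 else 0)
    (hpos : ∀ x ∈ {x | ∀ U ∈ nhds x, τ U ≠ 0}, 0 < ∑ i, ‖φ i x‖ ^ 2)
    (hne : ({x | ∀ U ∈ nhds x, τ U ≠ 0} : Set Ω).Nonempty) :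
    sInf {c : ℝ | 0 ≤ c ∧ ∀ p ∈ Submodule.span ℂ (Set.range φ),
        (⨆ z : {x | ∀ U ∈ nhds x, τ U ≠ 0},
            Real.sqrt (((N : ℝ)⁻¹ * ∑ i, ‖φ i z.1‖ ^ 2)⁻¹) * ‖p z.1‖)
          ≤ c * Real.sqrt (∫ x, ‖p x‖ ^ 2 ∂τ)}
      = Real.sqrt N := by
  have hNsub : Nonempty ({x | ∀ U ∈ nhds x, τ U ≠ 0} : Set Ω) := hne.to_subtype
  -- pointwise bound on the weighted value
  have hbound : ∀ (a : Fin N → ℂ) (z : Ω), z ∈ {x | ∀ U ∈ nhds x, τ U ≠ 0} →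
      Real.sqrt (((N : ℝ)⁻¹ * ∑ i, ‖φ i z‖ ^ 2)⁻¹) * ‖∑ i, a i * φ i z‖
        ≤ Real.sqrt N * Real.sqrt (∑ i, ‖a i‖ ^ 2) := by
    intro a z hzs
    have hS : 0 < ∑ i, ‖φ i z‖ ^ 2 := hpos z hzs
    have hCS := CSpt a (fun i => φ i z)
    have h1 : ((N : ℝ)⁻¹ * ∑ i, ‖φ i z‖ ^ 2)⁻¹ = (N : ℝ) * (∑ i, ‖φ i z‖ ^ 2)⁻¹ := by
      rw [mul_inv, inv_inv]
    rw [h1, Real.sqrt_mul (by positivity), Real.sqrt_inv]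
    have hsp : 0 < Real.sqrt (∑ i, ‖φ i z‖ ^ 2) := Real.sqrt_pos.2 hS
    calc Real.sqrt N * (Real.sqrt (∑ i, ‖φ i z‖ ^ 2))⁻¹ * ‖∑ i, a i * φ i z‖
        ≤ Real.sqrt N * (Real.sqrt (∑ i, ‖φ i z‖ ^ 2))⁻¹ *
            (Real.sqrt (∑ i, ‖a i‖ ^ 2) * Real.sqrt (∑ i, ‖φ i z‖ ^ 2)) :=
          mul_le_mul_of_nonneg_left hCS (by positivity)
      _ = Real.sqrt N * Real.sqrt (∑ i, ‖a i‖ ^ 2) := by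
          rw [mul_assoc, mul_comm (Real.sqrt (∑ i, ‖a i‖ ^ 2)),
            inv_mul_cancel_left₀ hsp.ne']
  -- membership of √N
  have hmem : Real.sqrt N ∈ {c : ℝ | 0 ≤ c ∧ ∀ p ∈ Submodule.span ℂ (Set.range φ),
        (⨆ z : {x | ∀ U ∈ nhds x, τ U ≠ 0},
            Real.sqrt (((N : ℝ)⁻¹ * ∑ i, ‖φ i z.1‖ ^ 2)⁻¹) * ‖p z.1‖)
          ≤ Real.sqrt N * Real.sqrt (∫ x, ‖p x‖ ^ 2 ∂τ)} := by
    refine ⟨Real.sqrt_nonneg _, fun p hp => ?_⟩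
    obtain ⟨a, ha⟩ := (Submodule.mem_span_range_iff_exists_fun ℂ).mp hp
    have hax : ∀ x, p x = ∑ i, a i * φ i x := by
      intro x; rw [← ha]; simp [Finset.sum_apply]
    have hL2 : ∫ x, ‖p x‖ ^ 2 ∂τ = ∑ i, ‖a i‖ ^ 2 := by
      simp_rw [hax]; exact L2calc τ N φ hint horth a
    rw [hL2]
    refine ciSup_le fun z => ?_
    rw [hax]
    exact hbound a z.1 z.2
  -- lower bound : every member is ≥ √N
  have hlb : ∀ c ∈ {c : ℝ | 0 ≤ c ∧ ∀ p ∈ Submodule.span ℂ (Set.range φ),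
        (⨆ z : {x | ∀ U ∈ nhds x, τ U ≠ 0},
            Real.sqrt (((N : ℝ)⁻¹ * ∑ i, ‖φ i z.1‖ ^ 2)⁻¹) * ‖p z.1‖)
          ≤ c * Real.sqrt (∫ x, ‖p x‖ ^ 2 ∂τ)}, Real.sqrt N ≤ c := by
    rintro c ⟨hc0, hc⟩
    obtain ⟨z, hz⟩ := hne
    set a : Fin N → ℂ := fun i => star (φ i z) with ha_def
    set p : Ω → ℂ := fun x => ∑ i, a i * φ i x with hp_def
    have hpmem : p ∈ Submodule.span ℂ (Set.range φ) := by
      refine (Submodule.mem_span_range_iff_exists_fun ℂ).mpr ⟨a, ?_⟩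
      funext x; simp [hp_def, Finset.sum_apply, smul_eq_mul]
    have hS : 0 < ∑ i, ‖φ i z‖ ^ 2 := hpos z hz
    have hna : ∀ i, ‖a i‖ ^ 2 = ‖φ i z‖ ^ 2 := fun i => by simp [ha_def]
    have hL2 : ∫ x, ‖p x‖ ^ 2 ∂τ = ∑ i, ‖φ i z‖ ^ 2 := by
      rw [show (∫ x, ‖p x‖ ^ 2 ∂τ) = ∫ x, ‖∑ i, a i * φ i x‖ ^ 2 ∂τ from rfl,
        L2calc τ N φ hint horth a]
      exact Finset.sum_congr rfl fun i _ => hna i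
    have hpz : ‖p z‖ = ∑ i, ‖φ i z‖ ^ 2 := by
      have : p z = ((∑ i, ‖φ i z‖ ^ 2 : ℝ) : ℂ) := by
        simp only [hp_def, ha_def]
        push_cast
        exact Finset.sum_congr rfl fun i _ => by rw [Complex.star_def, Complex.conj_mul']
      rw [this, Complex.norm_real, Real.norm_of_nonneg hS.le]
    have hbdd : BddAbove (Set.range fun z' : {x | ∀ U ∈ nhds x, τ U ≠ 0} =>
        Real.sqrt (((N : ℝ)⁻¹ * ∑ i, ‖φ i z'.1‖ ^ 2)⁻¹) * ‖p z'.1‖) := by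
      refine ⟨Real.sqrt N * Real.sqrt (∑ i, ‖a i‖ ^ 2), ?_⟩
      rintro y ⟨z', rfl⟩
      exact hbound a z'.1 z'.2
    have hkey := (le_ciSup hbdd ⟨z, hz⟩).trans (hc p hpmem)
    rw [hL2] at hkey
    have hval : Real.sqrt (((N : ℝ)⁻¹ * ∑ i, ‖φ i z‖ ^ 2)⁻¹) * ‖p z‖
        = Real.sqrt N * Real.sqrt (∑ i, ‖φ i z‖ ^ 2) := by
      rw [hpz, show ((N : ℝ)⁻¹ * ∑ i, ‖φ i z‖ ^ 2)⁻¹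
          = (N : ℝ) * (∑ i, ‖φ i z‖ ^ 2)⁻¹ by rw [mul_inv, inv_inv],
        Real.sqrt_mul (by positivity), Real.sqrt_inv, mul_assoc, inv_mul_eq_div,
        Real.div_sqrt]
    rw [hval] at hkey
    have hsp : 0 < Real.sqrt (∑ i, ‖φ i z‖ ^ 2) := Real.sqrt_pos.2 hS
    exact le_of_mul_le_mul_right hkey hsp
  refine le_antisymm (csInf_le ⟨0, fun c hc => hc.1⟩ hmem) (le_csInf ⟨_, hmem⟩ hlb)
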